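/- arXiv:2310.14472 — 2 statements merged into one kernel-verified Lean document; each statement's English description precedes it below -/
import Mathlib

section
/- Let G be a group acting on the right on a set Φ (written (φ,g) ↦ φ·g), H a group, and C : Φ × G → H a 1-cocycle, i.e. C(φ, g·g') = C(φ,g) · C(φ·g, g') for all φ, g, g'. Let u : Φ → G be a dressing field, i.e. u(φ·g) = g⁻¹ · u(φ) for all φ, g. Define C(u) : Φ → H by C(u)(φ) := C(φ, u(φ)). Then C(u)(φ·g) = C(φ,g)⁻¹ · C(u)(φ) for all φ ∈ Φ, g ∈ G; more generally, for every map f : Φ → G, C(u)(φ·f(φ)) = C(φ, f(φ))⁻¹ · C(u)(φ). -/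
/-- **A dressing field composed with a 1-cocycle is a dressing field for twisted forms.**
`G` acts on the right on `Φ` (abstracting the pullback action of `Diff(M)` on field space),
`C : Φ × G → H` is a 1-cocycle (`C(φ, g·g') = C(φ,g)·C(φ·g, g')`), and `u : Φ → G` is a
dressing field (`u(φ·g) = g⁻¹·u(φ)`). Then `C(u)(φ) := C(φ, u(φ))` transforms as
`C(u)(φ·g) = C(φ,g)⁻¹·C(u)(φ)`, and more generally `C(u)(φ·f(φ)) = C(φ,f(φ))⁻¹·C(u)(φ)` for
every map `f : Φ → G`. -/
theorem cocycle_dressing_field_equivariance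
    {G H Φ : Type*} [Group G] [Group H]
    (sm : Φ → G → Φ)
    (sm_one : ∀ φ : Φ, sm φ 1 = φ)
    (sm_mul : ∀ (φ : Φ) (g g' : G), sm φ (g * g') = sm (sm φ g) g')
    (C : Φ → G → H)
    (hC : ∀ (φ : Φ) (g g' : G), C φ (g * g') = C φ g * C (sm φ g) g')
    (u : Φ → G) (hu : ∀ (φ : Φ) (g : G), u (sm φ g) = g⁻¹ * u φ) :
    (∀ (φ : Φ) (g : G), C (sm φ g) (u (sm φ g)) = (C φ g)⁻¹ * C φ (u φ)) ∧
    (∀ (f : Φ → G) (φ : Φ),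
      C (sm φ (f φ)) (u (sm φ (f φ))) = (C φ (f φ))⁻¹ * C φ (u φ)) := by
  have key : ∀ (φ : Φ) (g : G), C (sm φ g) (u (sm φ g)) = (C φ g)⁻¹ * C φ (u φ) := by
    intro φ g
    have h := hC φ g (g⁻¹ * u φ)
    rw [← mul_assoc, mul_inv_cancel, one_mul] at h
    rw [hu, h]
    group
  exact ⟨key, fun f φ => key φ (f φ)⟩
end

section
/- Let G be a group acting on the right on a set Φ (written (φ,g) ↦ φ·g), H a group acting on the left on a set V (written (h,v) ↦ h•v), and C : Φ × G → H a 1-cocycle, i.e. C(φ, g·g') = C(φ,g) · C(φ·g, g'). Let u : Φ → G be a dressing field (u(φ·g) = g⁻¹·u(φ)) and set C(u)(φ) := C(φ, u(φ)). Suppose α : Φ → V is twisted equivariant: α(φ·g) = C(φ,g)⁻¹ • α(φ) for all φ, g. Then the dressed map α^u : Φ → V defined by α^u(φ) := C(u)(φ)⁻¹ • α(φ) is G-invariant: α^u(φ·g) = α^u(φ) for all φ, g, and moreover α^u(φ·f(φ)) = α^u(φ) for every map f : Φ → G. -/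
/-- **Dressing of a twisted equivariant (twisted tensorial) map is basic.**
`G` acts on the right on `Φ` (abstracting the pullback action of `Diff(M)` on field space),
`H` acts on the left on `V`, `C : Φ × G → H` is a 1-cocycle, `u : Φ → G` is a dressing field
(`u(φ·g) = g⁻¹·u(φ)`), and `C(u)(φ) := C(φ, u(φ))`. If `α : Φ → V` is twisted equivariant
(`α(φ·g) = C(φ,g)⁻¹ • α(φ)`), then the dressed map `α^u(φ) := C(u)(φ)⁻¹ • α(φ)` is
`G`-invariant, and moreover invariant under all field-dependent transformations
`φ ↦ φ·f(φ)`. -/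
theorem dressed_twisted_equivariant_map_is_basic
    {G H Φ V : Type*} [Group G] [Group H] [MulAction H V]
    (sm : Φ → G → Φ)
    (sm_one : ∀ φ : Φ, sm φ 1 = φ)
    (sm_mul : ∀ (φ : Φ) (g g' : G), sm φ (g * g') = sm (sm φ g) g')
    (C : Φ → G → H)
    (hC : ∀ (φ : Φ) (g g' : G), C φ (g * g') = C φ g * C (sm φ g) g')
    (u : Φ → G) (hu : ∀ (φ : Φ) (g : G), u (sm φ g) = g⁻¹ * u φ)
    (α : Φ → V) (hα : ∀ (φ : Φ) (g : G), α (sm φ g) = (C φ g)⁻¹ • α φ) :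
    (∀ (φ : Φ) (g : G),
      (C (sm φ g) (u (sm φ g)))⁻¹ • α (sm φ g) = (C φ (u φ))⁻¹ • α φ) ∧
    (∀ (f : Φ → G) (φ : Φ),
      (C (sm φ (f φ)) (u (sm φ (f φ))))⁻¹ • α (sm φ (f φ)) = (C φ (u φ))⁻¹ • α φ) := by
  have key : ∀ (φ : Φ) (g : G),
      (C (sm φ g) (u (sm φ g)))⁻¹ • α (sm φ g) = (C φ (u φ))⁻¹ • α φ := by
    intro φ g
    have h1 : C φ (u φ) = C φ g * C (sm φ g) (u (sm φ g)) := by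
      rw [hu]
      have := hC φ g (g⁻¹ * u φ)
      rw [← this, mul_inv_cancel_left]
    rw [hα, h1, mul_inv_rev, mul_smul]
  exact ⟨key, fun f φ => key φ (f φ)⟩
end
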